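/- Let g_1,…,g_d be a C^{k+ε} Cantor system on [0,1]. Then there exists C > 0 with the following property. Let u = (u_1,…,u_n) be any finite word and v = (v_1,…,v_l) any nonempty finite word; let H := g_{v_l} ∘ ⋯ ∘ g_{v_1} (so H maps the interval I_u onto the interval I_{uv}, where uv = (u_1,…,u_n,v_1,…,v_l)), and let F : [0,1] → [0,1] be the renormalization F := (L')⁻¹ ∘ H ∘ L, where L and L' are the increasing affine bijections from [0,1] onto I_u and onto I_{uv} respectively. Then for every integer t with 1 ≤ t ≤ k, sup_{x∈[0,1]} |D^t F(x)| ≤ C · |I_u|^{t−1}, and the ε-Hölder seminorm of D^k F on [0,1] is at most C · |I_u|^{k+ε−1}. -/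

import Mathlib

open Set Filter

noncomputable section

/-- The unit interval `[0,1] ⊆ ℝ`. -/
abbrev I01 : Set ℝ := Set.Icc (0:ℝ) 1

/-- `ψ` satisfies an `ε`-Hölder bound with constant `H` on `[0,1]`. -/
def HolderBoundOn01 (ε H : ℝ) (ψ : ℝ → ℝ) : Prop :=
  ∀ x ∈ I01, ∀ y ∈ I01, |ψ x - ψ y| ≤ H * |x - y| ^ ε

/-- A `C^{k+ε}` Cantor system on `[0,1]` with `d` branches: each branch `g i` is a
`C^k` increasing contraction of `[0,1]` with `ε`-Hölder `k`-th derivative, the images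
`g i ([0,1])` are disjoint closed intervals in increasing order, `g 0 0 = 0` and
`g (d-1) 1 = 1`. -/
structure IsCantorSystem {d : ℕ} (k : ℕ) (ε : ℝ) (g : Fin d → ℝ → ℝ) : Prop where
  maps : ∀ i, Set.MapsTo (g i) I01 I01
  smooth : ∀ i, ContDiffOn ℝ k (g i) I01
  holder : ∀ i, ∃ H > 0, HolderBoundOn01 ε H (iteratedDerivWithin k (g i) I01)
  deriv_pos : ∀ i, ∀ x ∈ I01, 0 < derivWithin (g i) I01 x
  deriv_lt_one : ∀ i, ∀ x ∈ I01, derivWithin (g i) I01 x < 1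
  ordered : ∀ i j : Fin d, i < j → g i 1 < g j 0
  first : ∀ i : Fin d, (i : ℕ) = 0 → g i 0 = 0
  last : ∀ i : Fin d, (i : ℕ) = d - 1 → g i 1 = 1

/-- For a finite word `w = [w₁,…,wₙ]`, `wordMap g w = g_{wₙ} ∘ ⋯ ∘ g_{w₁}` (i.e. `G_w`). -/
def wordMap {d : ℕ} (g : Fin d → ℝ → ℝ) : List (Fin d) → ℝ → ℝ
  | [] => id
  | i :: w => fun x => wordMap g w (g i x)

/-- `|I_w|`, the length of the interval `I_w = G_w([0,1]) = [G_w 0, G_w 1]`. -/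
def wordLen {d : ℕ} (g : Fin d → ℝ → ℝ) (w : List (Fin d)) : ℝ :=
  wordMap g w 1 - wordMap g w 0

/-- The scaling data of the word `w`: the first `d` coordinates are the ratios
`|I_{i·w}|/|I_w|`, the last `d-1` coordinates are the `d-1` gap lengths between the
consecutive children `I_{1·w},…,I_{d·w}` divided by `|I_w|`. -/
def scalingData {d : ℕ} (g : Fin d → ℝ → ℝ) (w : List (Fin d)) : Fin (2*d-1) → ℝ :=
  fun m =>
    if h : (m : ℕ) < d then
      wordLen g ((⟨(m : ℕ), h⟩ : Fin d) :: w) / wordLen g w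
    else
      (wordMap g w (g ⟨(m : ℕ) - d + 1, by have := m.isLt; omega⟩ 0)
        - wordMap g w (g ⟨(m : ℕ) - d, by have := m.isLt; omega⟩ 1)) / wordLen g w

/-- The open simplex `Simp_{2d-2} ⊆ (0,1)^{2d-1}` of vectors with coordinate sum `1`. -/
def Simp (d : ℕ) : Set (Fin (2*d-1) → ℝ) :=
  {s | (∀ m, s m ∈ Set.Ioo (0:ℝ) 1) ∧ ∑ m, s m = 1}

/-- The initial word `j|_n = (j_1,…,j_n)` of a sequence `j ∈ Σ_d^dual = {1,…,d}^ℕ`. -/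
def dword {d : ℕ} (j : ℕ → Fin d) (n : ℕ) : List (Fin d) :=
  List.ofFn (fun i : Fin n => j i)

/-- `S` is the scaling function of the system `g`:
`S(j) = lim_{n→∞} S_n(j|_n)` for every `j ∈ Σ_d^dual`. -/
def HasScalingFunction {d : ℕ} (g : Fin d → ℝ → ℝ) (S : (ℕ → Fin d) → Fin (2*d-1) → ℝ) : Prop :=
  ∀ j : ℕ → Fin d,
    Filter.Tendsto (fun n => scalingData g (dword j n)) Filter.atTop (nhds (S j))

/-- `ρ_S(j,j')` where `n = #(j∩j')`:
`ρ_S(j,j') = sup_w ∏_{t=1}^{n} S((j_{t+1},…,j_n)·w)_{j_t}` (depends only on `j` and `n`). -/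
def rhoS {d : ℕ} (S : (ℕ → Fin d) → Fin (2*d-1) → ℝ) (j : ℕ → Fin d) (n : ℕ) : ℝ :=
  ⨆ w : ℕ → Fin d, ∏ t ∈ Finset.range n,
    S (fun m => if t + 1 + m < n then j (t + 1 + m) else w (t + 1 + m - n))
      ⟨((j t) : ℕ), by have := (j t).isLt; omega⟩

/-- Given a scaling vector `s ∈ Simp_{2d-2}`, the partition of `[0,1]` it determines has
`i`-th child interval starting at `childLeft s i = ∑_{m<i} (s_m + s_{d+m})`. -/
def childLeft {d : ℕ} (s : Fin (2*d-1) → ℝ) (i : Fin d) : ℝ :=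
  ∑ m ∈ (Finset.range (i : ℕ)).attach,
    (s ⟨(m : ℕ), by have h := Finset.mem_range.mp m.2; have := i.isLt; omega⟩
      + s ⟨d + (m : ℕ), by have h := Finset.mem_range.mp m.2; have := i.isLt; omega⟩)

/-- The right endpoint of the `i`-th child interval of the partition determined by `s`. -/
def childRight {d : ℕ} (s : Fin (2*d-1) → ℝ) (i : Fin d) : ℝ :=
  childLeft s i + s ⟨(i : ℕ), by have := i.isLt; omega⟩

/-- `A(j)`: the set of `2d` endpoints of the `d` child intervals of the partition of `[0,1]`
determined by the scaling vector `s = S(j)`. -/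
def Apts {d : ℕ} (s : Fin (2*d-1) → ℝ) : Set ℝ :=
  ⋃ i : Fin d, {childLeft s i, childRight s i}

/-- An increasing `C^k` diffeomorphism of `[0,1]`. -/
structure IsDiffeo01 (k : ℕ) (φ : ℝ → ℝ) : Prop where
  smooth : ContDiffOn ℝ k φ I01
  mono : StrictMonoOn φ I01
  deriv_pos : ∀ x ∈ I01, 0 < derivWithin φ I01 x
  bij : Set.BijOn φ I01 I01

/-- `D^k(A₁,A₂)`: increasing `C^k` diffeomorphisms of `[0,1]` mapping `A₁` onto `A₂`. -/
def Dk (k : ℕ) (A₁ A₂ : Set ℝ) : Set (ℝ → ℝ) :=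
  {φ | IsDiffeo01 k φ ∧ φ '' A₁ = A₂}

/-- `D^k_var(M)(A₁,A₂)`: members of `D^k(A₁,A₂)` whose `k`-th derivative has variation `< M`. -/
def DkVar (k : ℕ) (M : ℝ) (A₁ A₂ : Set ℝ) : Set (ℝ → ℝ) :=
  {φ | φ ∈ Dk k A₁ A₂ ∧ ∀ x ∈ I01, ∀ y ∈ I01,
    |iteratedDerivWithin k φ I01 x - iteratedDerivWithin k φ I01 y| < M}

/-- The renormalization `(L')⁻¹ ∘ φ ∘ L` of `φ`, where `L, L'` are the increasing affine
bijections from `[0,1]` onto `[a,b]` and `[a',b']` respectively. -/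
def renorm (a b a' b' : ℝ) (φ : ℝ → ℝ) : ℝ → ℝ :=
  fun x => (φ (a + (b - a) * x) - a') / (b' - a')

/-- `R_{j₀} φ`: restrict `φ` to the `j₀`-th child interval of the partition determined by `s`
(mapped to the `j₀`-th child interval of the partition determined by `s'`) and renormalize. -/
def Rmap {d : ℕ} (s s' : Fin (2*d-1) → ℝ) (j₀ : Fin d) (φ : ℝ → ℝ) : ℝ → ℝ :=
  renorm (childLeft s j₀) (childRight s j₀) (childLeft s' j₀) (childRight s' j₀) φ

/-- `j₀·j = (j₀, j_1, j_2, …)`. -/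
def consSeq {d : ℕ} (j₀ : Fin d) (j : ℕ → Fin d) : ℕ → Fin d :=
  fun m => if m = 0 then j₀ else j (m - 1)

/-- The Cantor set of the system: `C = ⋂_{n ≥ 1} ⋃_{w of length n} I_w`. -/
def systemCantorSet {d : ℕ} (g : Fin d → ℝ → ℝ) : Set ℝ :=
  ⋂ n : ℕ, ⋃ w ∈ {w : List (Fin d) | w.length = n + 1}, wordMap g w '' I01

end

namespace Stmt12

open Real

lemma udiff : UniqueDiffOn ℝ I01 := uniqueDiffOn_Icc zero_lt_one

variable {d k : ℕ} {ε : ℝ} {g : Fin d → ℝ → ℝ}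

lemma wordMap_cons (i : Fin d) (w : List (Fin d)) (x : ℝ) :
    wordMap g (i :: w) x = wordMap g w (g i x) := rfl

lemma wordMap_append (u v : List (Fin d)) (x : ℝ) :
    wordMap g (u ++ v) x = wordMap g v (wordMap g u x) := by
  induction u generalizing x with
  | nil => rfl
  | cons i u ih => simp [wordMap, ih]

lemma mapsTo_wordMap (hm : ∀ i, Set.MapsTo (g i) I01 I01) (w : List (Fin d)) :
    Set.MapsTo (wordMap g w) I01 I01 := by
  induction w with
  | nil => exact fun x hx => hx
  | cons i w ih => exact fun x hx => ih (hm i hx)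

lemma contDiffOn_wordMap (hg : IsCantorSystem k ε g) (w : List (Fin d)) :
    ContDiffOn ℝ k (wordMap g w) I01 := by
  induction w with
  | nil => exact contDiffOn_id
  | cons i w ih => exact ContDiffOn.comp ih (hg.smooth i) (hg.maps i)

lemma derivWithin_wordMap_cons (hg : IsCantorSystem k ε g) (hk : 1 ≤ k)
    (i : Fin d) (w : List (Fin d)) {x : ℝ} (hx : x ∈ I01) :
    derivWithin (wordMap g (i :: w)) I01 x
      = derivWithin (wordMap g w) I01 (g i x) * derivWithin (g i) I01 x := by
  have hk' : (1 : WithTop ℕ∞) ≤ (k : ℕ) := by exact_mod_cast hk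
  have h1 : HasDerivWithinAt (g i) (derivWithin (g i) I01 x) I01 x :=
    (((hg.smooth i).differentiableOn (lt_of_lt_of_le zero_lt_one hk').ne') x hx).hasDerivWithinAt
  have h2 : HasDerivWithinAt (wordMap g w) (derivWithin (wordMap g w) I01 (g i x)) I01 (g i x) :=
    (((contDiffOn_wordMap hg w).differentiableOn (lt_of_lt_of_le zero_lt_one hk').ne') _ (hg.maps i hx)).hasDerivWithinAt
  exact (h2.comp x h1 (hg.maps i)).derivWithin (udiff x hx)

lemma derivWithin_wordMap_pos (hg : IsCantorSystem k ε g) (hk : 1 ≤ k)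
    (w : List (Fin d)) : ∀ {x : ℝ}, x ∈ I01 → 0 < derivWithin (wordMap g w) I01 x := by
  induction w with
  | nil =>
    intro x hx
    have h := (hasDerivWithinAt_id x I01).derivWithin (udiff x hx)
    show (0:ℝ) < derivWithin id I01 x
    rw [h]; norm_num
  | cons i w ih =>
    intro x hx
    rw [derivWithin_wordMap_cons hg hk i w hx]
    exact mul_pos (ih (hg.maps i hx)) (hg.deriv_pos i x hx)

lemma exists_uniform {ι : Type*} [Fintype ι] [Nonempty ι] {p : ι → ℝ → Prop}
    (mono : ∀ i a b, a ≤ b → p i a → p i b) (h : ∀ i, ∃ c, p i c) : ∃ c, ∀ i, p i c := by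
  choose c hc using h
  refine ⟨Finset.univ.sup' Finset.univ_nonempty c, fun i => mono i _ _ ?_ (hc i)⟩
  exact Finset.le_sup' c (Finset.mem_univ i)

lemma exists_bound_of_continuousOn {f : ℝ → ℝ} (h : ContinuousOn f I01) :
    ∃ M, 0 < M ∧ ∀ x ∈ I01, |f x| ≤ M := by
  obtain ⟨x0, -, hx0⟩ := isCompact_Icc.exists_isMaxOn (nonempty_Icc.mpr zero_le_one) h.abs
  exact ⟨max (|f x0|) 1, lt_of_lt_of_le one_pos (le_max_right _ _),
    fun x hx => le_trans (hx0 hx) (le_max_left _ _)⟩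

lemma exists_lam (hg : IsCantorSystem k ε g) (hk : 1 ≤ k) (hd : 0 < d) :
    ∃ lam : ℝ, 0 < lam ∧ lam < 1 ∧ ∀ i, ∀ x ∈ I01, derivWithin (g i) I01 x ≤ lam := by
  have hk' : (1 : WithTop ℕ∞) ≤ (k : ℕ) := by exact_mod_cast hk
  have h : ∀ i : Fin d, ∃ c, (c < 1 ∧ 0 < c) ∧ ∀ x ∈ I01, derivWithin (g i) I01 x ≤ c := by
    intro i
    obtain ⟨x0, hx0m, hx0⟩ := isCompact_Icc.exists_isMaxOn (nonempty_Icc.mpr zero_le_one)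
      ((hg.smooth i).continuousOn_derivWithin udiff hk')
    exact ⟨_, ⟨hg.deriv_lt_one i x0 hx0m, hg.deriv_pos i x0 hx0m⟩, fun x hx => hx0 hx⟩
  choose c hc h3 using h
  have hne : (Finset.univ : Finset (Fin d)).Nonempty := ⟨⟨0, hd⟩, Finset.mem_univ _⟩
  refine ⟨Finset.univ.sup' hne c, ?_, ?_,
    fun i x hx => (h3 i x hx).trans (Finset.le_sup' c (Finset.mem_univ i))⟩
  · exact (Finset.lt_sup'_iff hne).mpr ⟨⟨0, hd⟩, Finset.mem_univ _, (hc _).2⟩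
  · exact (Finset.sup'_lt_iff hne).mpr (fun i _ => (hc i).1)

lemma exists_m0 (hg : IsCantorSystem k ε g) (hk : 1 ≤ k) (hd : 0 < d) :
    ∃ m0 : ℝ, 0 < m0 ∧ m0 ≤ 1 ∧ ∀ i, ∀ x ∈ I01, m0 ≤ derivWithin (g i) I01 x := by
  have hk' : (1 : WithTop ℕ∞) ≤ (k : ℕ) := by exact_mod_cast hk
  have h : ∀ i : Fin d, ∃ c, (0 < c ∧ c ≤ 1) ∧ ∀ x ∈ I01, c ≤ derivWithin (g i) I01 x := by
    intro i
    obtain ⟨x0, hx0m, hx0⟩ := isCompact_Icc.exists_isMinOn (nonempty_Icc.mpr zero_le_one)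
      ((hg.smooth i).continuousOn_derivWithin udiff hk')
    exact ⟨_, ⟨hg.deriv_pos i x0 hx0m, (hg.deriv_lt_one i x0 hx0m).le⟩, fun x hx => hx0 hx⟩
  choose c hc h3 using h
  have hne : (Finset.univ : Finset (Fin d)).Nonempty := ⟨⟨0, hd⟩, Finset.mem_univ _⟩
  refine ⟨Finset.univ.inf' hne c, ?_, ?_,
    fun i x hx => le_trans (Finset.inf'_le c (Finset.mem_univ i)) (h3 i x hx)⟩
  · exact (Finset.lt_inf'_iff hne).mpr (fun i _ => (hc i).1)
  · exact (Finset.inf'_le_iff hne).mpr ⟨⟨0, hd⟩, Finset.mem_univ _, (hc _).2⟩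

end Stmt12
namespace Stmt12

variable {d k : ℕ} {ε : ℝ} {g : Fin d → ℝ → ℝ}

lemma abs_sub_le_one {x y : ℝ} (hx : x ∈ I01) (hy : y ∈ I01) : |x - y| ≤ 1 := by
  rw [abs_sub_le_iff]
  constructor <;> [linarith [hx.1, hx.2, hy.1, hy.2]; linarith [hx.1, hx.2, hy.1, hy.2]]

lemma le_rpow_self {r : ℝ} (hr0 : 0 ≤ r) (hr1 : r ≤ 1) (hε0 : 0 < ε) (hε1 : ε ≤ 1) :
    r ≤ r ^ ε := by
  rcases eq_or_lt_of_le hr0 with h | h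
  · rw [← h, Real.zero_rpow hε0.ne']
  · calc r = r ^ (1:ℝ) := (Real.rpow_one r).symm
      _ ≤ r ^ ε := Real.rpow_le_rpow_of_exponent_ge h hr1 hε1

lemma rpow_sub_le_one {x y : ℝ} (hx : x ∈ I01) (hy : y ∈ I01) (hε0 : 0 < ε) :
    |x - y| ^ ε ≤ 1 :=
  Real.rpow_le_one (abs_nonneg _) (abs_sub_le_one hx hy) hε0.le

lemma rpow_nonneg' (x y : ℝ) : 0 ≤ |x - y| ^ ε := Real.rpow_nonneg (abs_nonneg _) _

lemma lip_of_derivWithin_le {f : ℝ → ℝ} {C : ℝ} (hf : DifferentiableOn ℝ f I01)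
    (hC : ∀ z ∈ I01, |derivWithin f I01 z| ≤ C) {x y : ℝ} (hx : x ∈ I01) (hy : y ∈ I01) :
    |f x - f y| ≤ C * |x - y| := by
  have := Convex.norm_image_sub_le_of_norm_derivWithin_le hf
    (fun z hz => by rw [Real.norm_eq_abs]; exact hC z hz) (convex_Icc 0 1) hy hx
  simpa [Real.norm_eq_abs] using this

lemma exists_M (hg : IsCantorSystem k ε g) (hd : 0 < d) :
    ∃ M, 0 < M ∧ ∀ i, ∀ j, j ≤ k → ∀ x ∈ I01, |iteratedDerivWithin j (g i) I01 x| ≤ M := by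
  have : Nonempty (Fin d × Fin (k+1)) := ⟨⟨⟨0, hd⟩, ⟨0, Nat.succ_pos k⟩⟩⟩
  obtain ⟨M, hM⟩ := exists_uniform (ι := Fin d × Fin (k+1))
    (p := fun ij c => ∀ x ∈ I01, |iteratedDerivWithin (ij.2 : ℕ) (g ij.1) I01 x| ≤ c)
    (fun i a b hab h x hx => le_trans (h x hx) hab)
    (fun ij => by
      obtain ⟨M, _, hM⟩ := exists_bound_of_continuousOn
        ((hg.smooth ij.1).continuousOn_iteratedDerivWithin
          (by exact_mod_cast Nat.lt_succ_iff.mp ij.2.isLt) udiff)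
      exact ⟨M, hM⟩)
  refine ⟨max M 1, lt_of_lt_of_le one_pos (le_max_right _ _), fun i j hj x hx => ?_⟩
  exact le_trans (hM ⟨i, ⟨j, Nat.lt_succ_of_le hj⟩⟩ x hx) (le_max_left _ _)

lemma exists_Ak (hg : IsCantorSystem k ε g) (hd : 0 < d) :
    ∃ A, 0 < A ∧ ∀ i, ∀ x ∈ I01, ∀ y ∈ I01,
      |iteratedDerivWithin k (g i) I01 x - iteratedDerivWithin k (g i) I01 y|
        ≤ A * |x - y| ^ ε := by
  have : Nonempty (Fin d) := ⟨⟨0, hd⟩⟩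
  obtain ⟨A, hA⟩ := exists_uniform (ι := Fin d)
    (p := fun i c => ∀ x ∈ I01, ∀ y ∈ I01,
      |iteratedDerivWithin k (g i) I01 x - iteratedDerivWithin k (g i) I01 y| ≤ c * |x - y| ^ ε)
    (fun i a b hab h x hx y hy => le_trans (h x hx y hy)
      (mul_le_mul_of_nonneg_right hab (rpow_nonneg' x y)))
    (fun i => by obtain ⟨H, _, hH⟩ := hg.holder i; exact ⟨H, hH⟩)
  exact ⟨max A 1, lt_of_lt_of_le one_pos (le_max_right _ _),
    fun i x hx y hy => le_trans (hA i x hx y hy)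
      (mul_le_mul_of_nonneg_right (le_max_left _ _) (rpow_nonneg' x y))⟩

lemma exists_A (hg : IsCantorSystem k ε g) (hk : 1 ≤ k) (hd : 0 < d)
    (hε : ε ∈ Set.Ioc (0:ℝ) 1) :
    ∃ A, 0 < A ∧ ∀ i, ∀ x ∈ I01, ∀ y ∈ I01,
      |derivWithin (g i) I01 x - derivWithin (g i) I01 y| ≤ A * |x - y| ^ ε := by
  rcases eq_or_lt_of_le hk with h1 | h2
  · -- k = 1
    obtain ⟨A, hA0, hA⟩ := exists_Ak hg hd
    refine ⟨A, hA0, fun i x hx y hy => ?_⟩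
    have ex : ∀ z ∈ I01, iteratedDerivWithin k (g i) I01 z = derivWithin (g i) I01 z := by
      intro z hz
      rw [← h1, iteratedDerivWithin_one]
    rw [← ex x hx, ← ex y hy]
    exact hA i x hx y hy
  · -- 2 ≤ k
    obtain ⟨M, hM0, hM⟩ := exists_M hg hd
    refine ⟨M, hM0, fun i x hx y hy => ?_⟩
    have e1 : Set.EqOn (iteratedDerivWithin 1 (g i) I01) (derivWithin (g i) I01) I01 :=
      fun z hz => congrFun iteratedDerivWithin_one z
    have hdiff : DifferentiableOn ℝ (derivWithin (g i) I01) I01 :=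
      ((hg.smooth i).differentiableOn_iteratedDerivWithin (m := 1)
        (by exact_mod_cast h2) udiff).congr (fun z hz => (e1 hz).symm)
    have hbd : ∀ z ∈ I01, |derivWithin (derivWithin (g i) I01) I01 z| ≤ M := by
      intro z hz
      rw [← derivWithin_congr e1 (e1 hz), ← iteratedDerivWithin_succ]
      exact hM i 2 h2 z hz
    calc |derivWithin (g i) I01 x - derivWithin (g i) I01 y| ≤ M * |x - y| :=
          lip_of_derivWithin_le hdiff hbd hx hy
      _ ≤ M * |x - y| ^ ε := mul_le_mul_of_nonneg_left
          (le_rpow_self (abs_nonneg _) (abs_sub_le_one hx hy) hε.1 hε.2) hM0.le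

lemma iteratedDerivWithin_id_one {x : ℝ} (hx : x ∈ I01) :
    iteratedDerivWithin 1 (wordMap g []) I01 x = 1 := by
  rw [iteratedDerivWithin_one]
  exact (hasDerivWithinAt_id x I01).derivWithin (udiff x hx)

lemma iteratedDerivWithin_id_zero (t : ℕ) (ht : 2 ≤ t) :
    ∀ {x : ℝ}, x ∈ I01 → iteratedDerivWithin t (wordMap g []) I01 x = 0 := by
  induction t with
  | zero => omega
  | succ n ih =>
    intro x hx
    rcases eq_or_lt_of_le ht with h2 | h2
    · -- n + 1 = 2, n = 1
      have hn : n = 1 := by omega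
      subst hn
      rw [iteratedDerivWithin_succ,
        derivWithin_congr (fun z hz => iteratedDerivWithin_id_one hz)
          (iteratedDerivWithin_id_one hx)]
      exact congrFun (derivWithin_fun_const _ _) x
    · have hn : 2 ≤ n := by omega
      rw [iteratedDerivWithin_succ,
        derivWithin_congr (fun z hz => ih hn hz) (ih hn hx)]
      exact congrFun (derivWithin_fun_const _ _) x

lemma exists_slope (hg : IsCantorSystem k ε g) (hk : 1 ≤ k) (w : List (Fin d))
    {a b : ℝ} (hab : a < b) (ha : a ∈ I01) (hb : b ∈ I01) :
    ∃ ξ ∈ I01, wordMap g w b - wordMap g w a = derivWithin (wordMap g w) I01 ξ * (b - a) := by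
  have hk' : (1 : WithTop ℕ∞) ≤ (k : ℕ) := by exact_mod_cast hk
  have hcont : ContinuousOn (wordMap g w) (Set.Icc a b) :=
    ((contDiffOn_wordMap hg w).continuousOn).mono (Set.Icc_subset_Icc ha.1 hb.2)
  have hderiv : ∀ x ∈ Set.Ioo a b, HasDerivAt (wordMap g w) (derivWithin (wordMap g w) I01 x) x := by
    intro x hx
    have hxI : I01 ∈ nhds x := Icc_mem_nhds (lt_of_le_of_lt ha.1 hx.1) (lt_of_lt_of_le hx.2 hb.2)
    have hdx : DifferentiableWithinAt ℝ (wordMap g w) I01 x :=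
      ((contDiffOn_wordMap hg w).differentiableOn (lt_of_lt_of_le zero_lt_one hk').ne') x
        ⟨le_trans ha.1 hx.1.le, le_trans hx.2.le hb.2⟩
    have h2 := (hdx.differentiableAt hxI).hasDerivAt
    rwa [derivWithin_of_mem_nhds hxI]
  obtain ⟨ξ, hξ, hs⟩ := exists_hasDerivAt_eq_slope (wordMap g w) _ hab hcont hderiv
  refine ⟨ξ, ⟨le_trans ha.1 hξ.1.le, le_trans hξ.2.le hb.2⟩, ?_⟩
  rw [hs]
  field_simp [sub_ne_zero.mpr hab.ne']

lemma wordLen_pos (hg : IsCantorSystem k ε g) (hk : 1 ≤ k) (w : List (Fin d)) :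
    0 < wordLen g w := by
  obtain ⟨ξ, hξ, hs⟩ := exists_slope hg hk w one_pos
    (Set.left_mem_Icc.mpr zero_le_one) (Set.right_mem_Icc.mpr zero_le_one)
  rw [wordLen, hs]
  have := derivWithin_wordMap_pos hg hk w hξ
  linarith

lemma wordLen_le_one (hg : IsCantorSystem k ε g) (w : List (Fin d)) : wordLen g w ≤ 1 := by
  have h1 := mapsTo_wordMap hg.maps w (Set.right_mem_Icc.mpr zero_le_one)
  have h0 := mapsTo_wordMap hg.maps w (Set.left_mem_Icc.mpr zero_le_one)
  rw [wordLen]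
  linarith [h1.2, h0.1]

end Stmt12
namespace Stmt12

variable {d k : ℕ} {ε : ℝ}

inductive Good (g : Fin d → ℝ → ℝ) (k : ℕ) : ℕ → (ℝ → ℝ) → Prop
  | zero : Good g k 0 (fun _ => 0)
  | gderiv (i : Fin d) (j : ℕ) (hj : j ≤ k) : Good g k j (iteratedDerivWithin j (g i) I01)
  | add {r h₁ h₂} : Good g k r h₁ → Good g k r h₂ → Good g k r (fun x => h₁ x + h₂ x)
  | mul {r h₁ h₂} : Good g k r h₁ → Good g k r h₂ → Good g k r (fun x => h₁ x * h₂ x)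
  | mono {r r' h} : Good g k r h → r ≤ r' → Good g k r' h

variable {g : Fin d → ℝ → ℝ}

lemma Good.continuousOn (hg : IsCantorSystem k ε g) {r : ℕ} {h : ℝ → ℝ}
    (hG : Good g k r h) : ContinuousOn h I01 := by
  induction hG with
  | zero => exact continuousOn_const
  | gderiv i j hj =>
    exact (hg.smooth i).continuousOn_iteratedDerivWithin (by exact_mod_cast hj) udiff
  | add _ _ ih1 ih2 => exact ih1.add ih2
  | mul _ _ ih1 ih2 => exact ih1.mul ih2
  | mono _ _ ih => exact ih

lemma Good.bound (hg : IsCantorSystem k ε g) {r : ℕ} {h : ℝ → ℝ}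
    (hG : Good g k r h) : ∃ M, 0 < M ∧ ∀ x ∈ I01, |h x| ≤ M :=
  exists_bound_of_continuousOn (hG.continuousOn hg)

lemma Good.holder (hg : IsCantorSystem k ε g) (hd : 0 < d)
    (hε : ε ∈ Set.Ioc (0:ℝ) 1) {r : ℕ} {h : ℝ → ℝ}
    (hG : Good g k r h) :
    ∃ H, 0 < H ∧ ∀ x ∈ I01, ∀ y ∈ I01, |h x - h y| ≤ H * |x - y| ^ ε := by
  obtain ⟨M, hM0, hM⟩ := exists_M hg hd
  induction hG with
  | zero =>
    refine ⟨1, one_pos, fun x hx y hy => ?_⟩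
    simp only [sub_zero, abs_zero, sub_self]
    have := rpow_nonneg' (ε := ε) x y
    linarith
  | gderiv i j hj =>
    rcases eq_or_lt_of_le hj with hkj | hjk
    · subst hkj
      obtain ⟨A, hA0, hA⟩ := exists_Ak hg hd
      exact ⟨A, hA0, fun x hx y hy => hA i x hx y hy⟩
    · refine ⟨M, hM0, fun x hx y hy => ?_⟩
      have hdiff : DifferentiableOn ℝ (iteratedDerivWithin j (g i) I01) I01 :=
        (hg.smooth i).differentiableOn_iteratedDerivWithin (by exact_mod_cast hjk) udiff
      have hbd : ∀ z ∈ I01, |derivWithin (iteratedDerivWithin j (g i) I01) I01 z| ≤ M :=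
        fun z hz => by
          rw [← iteratedDerivWithin_succ]
          exact hM i (j+1) hjk z hz
      calc |iteratedDerivWithin j (g i) I01 x - iteratedDerivWithin j (g i) I01 y|
          ≤ M * |x - y| := lip_of_derivWithin_le hdiff hbd hx hy
        _ ≤ M * |x - y| ^ ε := mul_le_mul_of_nonneg_left
            (le_rpow_self (abs_nonneg _) (abs_sub_le_one hx hy) hε.1 hε.2) hM0.le
  | add a1 a2 ih1 ih2 =>
    obtain ⟨H1, hH10, hH1⟩ := ih1
    obtain ⟨H2, hH20, hH2⟩ := ih2
    refine ⟨H1 + H2, by linarith, fun x hx y hy => ?_⟩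
    rename_i h₁ h₂
    calc |(h₁ x + h₂ x) - (h₁ y + h₂ y)| = |(h₁ x - h₁ y) + (h₂ x - h₂ y)| := by congr 1; ring
      _ ≤ |h₁ x - h₁ y| + |h₂ x - h₂ y| := abs_add_le _ _
      _ ≤ H1 * |x - y| ^ ε + H2 * |x - y| ^ ε := add_le_add (hH1 x hx y hy) (hH2 x hx y hy)
      _ = (H1 + H2) * |x - y| ^ ε := by ring
  | mul a1 a2 ih1 ih2 =>
    obtain ⟨H1, hH10, hH1⟩ := ih1
    obtain ⟨H2, hH20, hH2⟩ := ih2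
    obtain ⟨M1, hM10, hM1⟩ := a1.bound hg
    obtain ⟨M2, hM20, hM2⟩ := a2.bound hg
    refine ⟨M1 * H2 + M2 * H1, by positivity, fun x hx y hy => ?_⟩
    rename_i h₁ h₂
    calc |h₁ x * h₂ x - h₁ y * h₂ y|
        = |h₁ x * (h₂ x - h₂ y) + (h₁ x - h₁ y) * h₂ y| := by congr 1; ring
      _ ≤ |h₁ x * (h₂ x - h₂ y)| + |(h₁ x - h₁ y) * h₂ y| := abs_add_le _ _
      _ = |h₁ x| * |h₂ x - h₂ y| + |h₁ x - h₁ y| * |h₂ y| := by rw [abs_mul, abs_mul]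
      _ ≤ M1 * (H2 * |x - y| ^ ε) + (H1 * |x - y| ^ ε) * M2 := by
          apply add_le_add
          · exact mul_le_mul (hM1 x hx) (hH2 x hx y hy) (abs_nonneg _)
              hM10.le
          · exact mul_le_mul (hH1 x hx y hy) (hM2 y hy) (abs_nonneg _)
              (by positivity)
      _ = (M1 * H2 + M2 * H1) * |x - y| ^ ε := by ring
  | mono a hle ih => exact ih

lemma Good.derivWithin (hg : IsCantorSystem k ε g) {r : ℕ} {h : ℝ → ℝ}
    (hG : Good g k r h) (hr : r < k) :
    ∃ h', Good g k (r+1) h' ∧ DifferentiableOn ℝ h I01 ∧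
      ∀ x ∈ I01, derivWithin h I01 x = h' x := by
  induction hG with
  | zero =>
    exact ⟨fun _ => (0:ℝ), Good.zero.mono (Nat.zero_le _), differentiableOn_const _,
      fun x hx => congrFun (derivWithin_fun_const _ _) x⟩
  | gderiv i j hj =>
    exact ⟨iteratedDerivWithin (j+1) (g i) I01, Good.gderiv i (j+1) hr,
      (hg.smooth i).differentiableOn_iteratedDerivWithin (by exact_mod_cast hr) udiff,
      fun x hx => (congrFun iteratedDerivWithin_succ x).symm⟩
  | add a1 a2 ih1 ih2 =>
    obtain ⟨h1', hG1, hd1, he1⟩ := ih1 hr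
    obtain ⟨h2', hG2, hd2, he2⟩ := ih2 hr
    refine ⟨fun x => h1' x + h2' x, hG1.add hG2, hd1.add hd2, fun x hx => ?_⟩
    rw [derivWithin_fun_add (hd1 x hx) (hd2 x hx), he1 x hx, he2 x hx]
  | mul a1 a2 ih1 ih2 =>
    obtain ⟨h1', hG1, hd1, he1⟩ := ih1 hr
    obtain ⟨h2', hG2, hd2, he2⟩ := ih2 hr
    rename_i h₁ h₂
    refine ⟨fun x => h1' x * h₂ x + h₁ x * h2' x,
      (hG1.mul (a2.mono (Nat.le_succ _))).add ((a1.mono (Nat.le_succ _)).mul hG2),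
      hd1.mul hd2, fun x hx => ?_⟩
    rw [derivWithin_fun_mul (hd1 x hx) (hd2 x hx), he1 x hx, he2 x hx]
  | mono a hle ih =>
    obtain ⟨h', hG', hd', he'⟩ := ih (lt_of_le_of_lt hle hr)
    exact ⟨h', hG'.mono (Nat.succ_le_succ hle), hd', he'⟩

end Stmt12
namespace Stmt12

variable {d k : ℕ} {ε : ℝ} {g : Fin d → ℝ → ℝ}

lemma hasDerivWithinAt_iteratedDerivWithin {G : ℝ → ℝ} (hG : ContDiffOn ℝ k G I01)
    {m : ℕ} (hm : m + 1 ≤ k) {z : ℝ} (hz : z ∈ I01) :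
    HasDerivWithinAt (iteratedDerivWithin m G I01)
      (iteratedDerivWithin (m+1) G I01 z) I01 z := by
  have hd : DifferentiableWithinAt ℝ (iteratedDerivWithin m G I01) I01 z :=
    (hG.differentiableOn_iteratedDerivWithin (by exact_mod_cast hm) udiff) z hz
  have := hd.hasDerivWithinAt
  rwa [← iteratedDerivWithin_succ] at this

lemma expansion (hg : IsCantorSystem k ε g) (hk : 1 ≤ k) (i : Fin d) (t : ℕ)
    (ht1 : 1 ≤ t) (htk : t ≤ k) :
    ∃ P : ℕ → ℝ → ℝ,
      (∀ m, Good g k t (P m)) ∧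
      (∀ x ∈ I01, P t x = (derivWithin (g i) I01 x) ^ t) ∧
      (∀ G : ℝ → ℝ, ContDiffOn ℝ k G I01 → ∀ x ∈ I01,
        iteratedDerivWithin t (fun y => G (g i y)) I01 x
          = ∑ m ∈ Finset.range t, iteratedDerivWithin (m+1) G I01 (g i x) * P (m+1) x) := by
  have hk' : (1 : WithTop ℕ∞) ≤ (k : ℕ) := by exact_mod_cast hk
  induction t with
  | zero => omega
  | succ n ih =>
    rcases Nat.eq_zero_or_pos n with hn0 | hn1
    · -- base case t = 1
      subst hn0
      refine ⟨fun m => if m = 1 then iteratedDerivWithin 1 (g i) I01 else (fun _ => 0),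
        ?_, ?_, ?_⟩
      · intro m
        beta_reduce
        rcases eq_or_ne m 1 with h | h
        · rw [if_pos h]; exact Good.gderiv i 1 htk
        · rw [if_neg h]; exact Good.zero.mono (Nat.zero_le _)
      · intro x hx
        beta_reduce
        rw [if_pos rfl, pow_one]
        exact congrFun iteratedDerivWithin_one x
      · intro G hGc x hx
        have hgx := hg.maps i hx
        have h1 : HasDerivWithinAt (g i) (derivWithin (g i) I01 x) I01 x :=
          (((hg.smooth i).differentiableOn (lt_of_lt_of_le zero_lt_one hk').ne') x hx).hasDerivWithinAt
        have h2 : HasDerivWithinAt G (derivWithin G I01 (g i x)) I01 (g i x) :=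
          ((hGc.differentiableOn (lt_of_lt_of_le zero_lt_one hk').ne') _ hgx).hasDerivWithinAt
        have hcomp := (h2.comp x h1 (hg.maps i)).derivWithin (udiff x hx)
        rw [iteratedDerivWithin_one]
        calc derivWithin (fun y => G (g i y)) I01 x
            = derivWithin G I01 (g i x) * derivWithin (g i) I01 x := hcomp
          _ = _ := by
              rw [Finset.sum_range_one]
              beta_reduce
              rw [if_pos rfl,
                iteratedDerivWithin_one, iteratedDerivWithin_one]
    · -- inductive step, 1 ≤ n, n + 1 ≤ k
      have hnk : n < k := lt_of_lt_of_le (Nat.lt_succ_self n) htk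
      obtain ⟨P, hPG, hPtop, hPid⟩ := ih hn1 hnk.le
      choose D hD1 hD2 hD3 using fun m => (hPG m).derivWithin hg hnk
      set gp := iteratedDerivWithin 1 (g i) I01 with hgp
      set Pnew : ℕ → ℝ → ℝ := fun s x => (if s ≤ n then D s x else 0)
          + (if 2 ≤ s ∧ s ≤ n + 1 then P (s-1) x * gp x else 0) with hPnew
      refine ⟨Pnew, ?_, ?_, ?_⟩
      · intro m
        simp only [hPnew]
        by_cases h1 : m ≤ n <;> by_cases h2 : 2 ≤ m ∧ m ≤ n + 1 <;>
          simp only [h1, h2, if_true, if_false, add_zero, zero_add]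
        · exact (hD1 m).add (((hPG (m-1)).mono (Nat.le_succ _)).mul
            ((Good.gderiv i 1 hk).mono (by omega)))
        · exact hD1 m
        · exact ((hPG (m-1)).mono (Nat.le_succ _)).mul
            ((Good.gderiv i 1 hk).mono (by omega))
        · exact Good.zero.mono (Nat.zero_le _)
      · intro x hx
        have hc1 : ¬ (n + 1 ≤ n) := by omega
        have hc2 : 2 ≤ n + 1 ∧ n + 1 ≤ n + 1 := by omega
        rw [hPnew]
        beta_reduce
        rw [if_neg hc1, if_pos hc2, zero_add, Nat.add_sub_cancel,
          hPtop x hx, hgp, iteratedDerivWithin_one]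
        ring
      · intro G hGc x hx
        have hgx := hg.maps i hx
        have hgderiv : HasDerivWithinAt (g i) (derivWithin (g i) I01 x) I01 x :=
          (((hg.smooth i).differentiableOn (lt_of_lt_of_le zero_lt_one hk').ne') x hx).hasDerivWithinAt
        have hEq : Set.EqOn (iteratedDerivWithin n (fun y => G (g i y)) I01)
            (fun y => ∑ m ∈ Finset.range n,
              iteratedDerivWithin (m+1) G I01 (g i y) * P (m+1) y) I01 :=
          fun y hy => hPid G hGc y hy
        have hterm : ∀ m ∈ Finset.range n, HasDerivWithinAt
            (fun y => iteratedDerivWithin (m+1) G I01 (g i y) * P (m+1) y)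
            (iteratedDerivWithin (m+2) G I01 (g i x) * derivWithin (g i) I01 x * P (m+1) x
              + iteratedDerivWithin (m+1) G I01 (g i x) * D (m+1) x) I01 x := by
          intro m hm
          have hA : HasDerivWithinAt (fun y => iteratedDerivWithin (m+1) G I01 (g i y))
              (iteratedDerivWithin (m+2) G I01 (g i x) * derivWithin (g i) I01 x) I01 x := by
            have houter : HasDerivWithinAt (iteratedDerivWithin (m+1) G I01)
                (iteratedDerivWithin (m+2) G I01 (g i x)) I01 (g i x) :=
              hasDerivWithinAt_iteratedDerivWithin hGc (by
                have := Finset.mem_range.mp hm; omega) hgx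
            exact houter.comp x hgderiv (hg.maps i)
          have hB : HasDerivWithinAt (P (m+1)) (D (m+1) x) I01 x := by
            have := ((hD2 (m+1)) x hx).hasDerivWithinAt
            rwa [hD3 (m+1) x hx] at this
          exact hA.mul hB
        have hsum := HasDerivWithinAt.fun_sum hterm
        rw [iteratedDerivWithin_succ, derivWithin_congr hEq (hEq hx),
          hsum.derivWithin (udiff x hx)]
        have halg : ∀ m ∈ Finset.range (n+1),
            iteratedDerivWithin (m+1) G I01 (g i x) * Pnew (m+1) x
            = (if m + 1 ≤ n then iteratedDerivWithin (m+1) G I01 (g i x) * D (m+1) x else 0)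
              + (if 1 ≤ m then iteratedDerivWithin (m+1) G I01 (g i x) * (P m x * gp x)
                  else 0) := by
          intro m hm
          have hiff : (2 ≤ m + 1 ∧ m + 1 ≤ n + 1) ↔ 1 ≤ m := by
            have := Finset.mem_range.mp hm; omega
          simp only [hPnew, hiff, Nat.add_sub_cancel]
          split_ifs <;> ring
        have hS1 : ∑ m ∈ Finset.range (n+1),
            (if m + 1 ≤ n then iteratedDerivWithin (m+1) G I01 (g i x) * D (m+1) x else 0)
            = ∑ m ∈ Finset.range n, iteratedDerivWithin (m+1) G I01 (g i x) * D (m+1) x := by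
          rw [Finset.sum_range_succ, if_neg (by omega), add_zero]
          exact Finset.sum_congr rfl (fun m hm => by
            rw [if_pos (by have := Finset.mem_range.mp hm; omega)])
        have hS2 : ∑ m ∈ Finset.range (n+1),
            (if 1 ≤ m then iteratedDerivWithin (m+1) G I01 (g i x) * (P m x * gp x) else 0)
            = ∑ m ∈ Finset.range n,
                iteratedDerivWithin (m+2) G I01 (g i x) * (P (m+1) x * gp x) := by
          rw [Finset.sum_range_succ', if_neg (by omega), add_zero]
          exact Finset.sum_congr rfl (fun m hm => by rw [if_pos (by omega)])
        have hR : ∑ m ∈ Finset.range (n+1),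
            iteratedDerivWithin (m+1) G I01 (g i x) * Pnew (m+1) x
            = (∑ m ∈ Finset.range n, iteratedDerivWithin (m+1) G I01 (g i x) * D (m+1) x)
              + ∑ m ∈ Finset.range n,
                  iteratedDerivWithin (m+2) G I01 (g i x) * (P (m+1) x * gp x) := by
          rw [Finset.sum_congr rfl halg, Finset.sum_add_distrib, hS1, hS2]
        have hA : ∑ m ∈ Finset.range n,
            iteratedDerivWithin (m+2) G I01 (g i x) * derivWithin (g i) I01 x * P (m+1) x
            = ∑ m ∈ Finset.range n,
                iteratedDerivWithin (m+2) G I01 (g i x) * (P (m+1) x * gp x) :=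
          Finset.sum_congr rfl (fun m hm => by
            rw [hgp, iteratedDerivWithin_one]; ring)
        rw [hR, Finset.sum_add_distrib, hA]
        exact add_comm _ _

end Stmt12
namespace Stmt12

variable {d k : ℕ} {ε : ℝ} {g : Fin d → ℝ → ℝ}

lemma single_lip (hg : IsCantorSystem k ε g) (hk : 1 ≤ k) {lam : ℝ}
    (hlam : ∀ i, ∀ x ∈ I01, derivWithin (g i) I01 x ≤ lam) (i : Fin d)
    {x y : ℝ} (hx : x ∈ I01) (hy : y ∈ I01) : |g i x - g i y| ≤ lam * |x - y| := by
  have hk' : (1 : WithTop ℕ∞) ≤ (k : ℕ) := by exact_mod_cast hk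
  refine lip_of_derivWithin_le ((hg.smooth i).differentiableOn (lt_of_lt_of_le zero_lt_one hk').ne') (fun z hz => ?_) hx hy
  rw [abs_of_pos (hg.deriv_pos i z hz)]
  exact hlam i z hz

lemma distortion (hg : IsCantorSystem k ε g) (hk : 1 ≤ k) (hd : 0 < d)
    (hε : ε ∈ Set.Ioc (0:ℝ) 1) :
    ∃ Q, 0 < Q ∧ ∀ w : List (Fin d), ∀ x ∈ I01, ∀ y ∈ I01,
      derivWithin (wordMap g w) I01 x
        ≤ derivWithin (wordMap g w) I01 y * Real.exp (Q * |x - y| ^ ε) := by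
  obtain ⟨lam, hl0, hl1, hlam⟩ := exists_lam hg hk hd
  obtain ⟨m0, hm00, hm01, hm0⟩ := exists_m0 hg hk hd
  obtain ⟨A, hA0, hA⟩ := exists_A hg hk hd hε
  have hle : lam ^ ε < 1 := Real.rpow_lt_one hl0.le hl1 hε.1
  set Q := (A / m0) / (1 - lam ^ ε) with hQdef
  have hQ0 : 0 < Q := div_pos (div_pos hA0 hm00) (by linarith)
  have hkey : Q * lam ^ ε + A / m0 ≤ Q := by
    have h := div_mul_cancel₀ (A / m0) (b := 1 - lam ^ ε) (by linarith)
    rw [← hQdef] at h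
    nlinarith [h]
  refine ⟨Q, hQ0, ?_⟩
  intro w
  induction w with
  | nil =>
    intro x hx y hy
    have h1 := (hasDerivWithinAt_id x I01).derivWithin (udiff x hx)
    have h2 := (hasDerivWithinAt_id y I01).derivWithin (udiff y hy)
    show derivWithin id I01 x ≤ derivWithin id I01 y * Real.exp (Q * |x - y| ^ ε)
    rw [h1, h2, one_mul]
    exact Real.one_le_exp (by positivity)
  | cons i w ihw =>
    intro x hx y hy
    have hgx := hg.maps i hx
    have hgy := hg.maps i hy
    have r0 : (0:ℝ) ≤ |x - y| ^ ε := rpow_nonneg' x y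
    rw [derivWithin_wordMap_cons hg hk i w hx, derivWithin_wordMap_cons hg hk i w hy]
    have hgpy := hg.deriv_pos i y hy
    have hgpx := hg.deriv_pos i x hx
    have e1 : derivWithin (g i) I01 x
        ≤ derivWithin (g i) I01 y * Real.exp ((A/m0) * |x - y| ^ ε) := by
      have h3 : derivWithin (g i) I01 x ≤ derivWithin (g i) I01 y + A * |x - y| ^ ε := by
        have := hA i x hx y hy
        have h4 := le_abs_self (derivWithin (g i) I01 x - derivWithin (g i) I01 y)
        linarith
      have h5 : A * |x - y| ^ ε ≤ derivWithin (g i) I01 y * ((A/m0) * |x - y| ^ ε) := by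
        have hy0 := hm0 i y hy
        have hc : m0 * (A / m0) = A := mul_div_cancel₀ A hm00.ne'
        nlinarith [mul_nonneg (mul_nonneg (sub_nonneg.mpr hy0)
          (div_nonneg hA0.le hm00.le)) r0]
      have h6 : derivWithin (g i) I01 y * (1 + (A/m0) * |x - y| ^ ε)
          ≤ derivWithin (g i) I01 y * Real.exp ((A/m0) * |x - y| ^ ε) := by
        refine mul_le_mul_of_nonneg_left ?_ hgpy.le
        have := Real.add_one_le_exp ((A/m0) * |x - y| ^ ε)
        linarith
      calc derivWithin (g i) I01 x ≤ derivWithin (g i) I01 y + A * |x - y| ^ ε := h3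
        _ ≤ derivWithin (g i) I01 y * (1 + (A/m0) * |x - y| ^ ε) := by
            rw [mul_add, mul_one]; linarith
        _ ≤ _ := h6
    have e3 : |g i x - g i y| ^ ε ≤ lam ^ ε * |x - y| ^ ε := by
      calc |g i x - g i y| ^ ε ≤ (lam * |x - y|) ^ ε :=
            Real.rpow_le_rpow (abs_nonneg _) (single_lip hg hk hlam i hx hy) hε.1.le
        _ = lam ^ ε * |x - y| ^ ε := Real.mul_rpow hl0.le (abs_nonneg _)
    have e4 := ihw (g i x) hgx (g i y) hgy
    have e5 : Real.exp (Q * |g i x - g i y| ^ ε) ≤ Real.exp (Q * (lam ^ ε * |x - y| ^ ε)) :=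
      Real.exp_le_exp.mpr (mul_le_mul_of_nonneg_left e3 hQ0.le)
    have hGy := derivWithin_wordMap_pos hg hk w hgy
    have hGx := derivWithin_wordMap_pos hg hk w hgx
    calc derivWithin (wordMap g w) I01 (g i x) * derivWithin (g i) I01 x
        ≤ (derivWithin (wordMap g w) I01 (g i y) * Real.exp (Q * (lam ^ ε * |x - y| ^ ε)))
          * (derivWithin (g i) I01 y * Real.exp ((A/m0) * |x - y| ^ ε)) := by
          refine mul_le_mul (e4.trans (mul_le_mul_of_nonneg_left e5 hGy.le)) e1 hgpx.le ?_
          positivity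
      _ = derivWithin (wordMap g w) I01 (g i y) * derivWithin (g i) I01 y
          * Real.exp ((Q * lam ^ ε + A/m0) * |x - y| ^ ε) := by
          rw [show (Q * lam ^ ε + A/m0) * |x - y| ^ ε
            = Q * (lam ^ ε * |x - y| ^ ε) + (A/m0) * |x - y| ^ ε by ring, Real.exp_add]
          ring
      _ ≤ derivWithin (wordMap g w) I01 (g i y) * derivWithin (g i) I01 y
          * Real.exp (Q * |x - y| ^ ε) := by
          refine mul_le_mul_of_nonneg_left (Real.exp_le_exp.mpr ?_) (by positivity)
          exact mul_le_mul_of_nonneg_right hkey r0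

end Stmt12
namespace Stmt12

variable {d k : ℕ} {ε : ℝ} {g : Fin d → ℝ → ℝ}

lemma deriv_bound (hg : IsCantorSystem k ε g) (hk : 1 ≤ k) (hd : 0 < d)
    (hε : ε ∈ Set.Ioc (0:ℝ) 1) :
    ∃ C, 0 < C ∧ ∀ t, 1 ≤ t → t ≤ k → ∀ w : List (Fin d), ∀ x ∈ I01,
      |iteratedDerivWithin t (wordMap g w) I01 x|
        ≤ C * derivWithin (wordMap g w) I01 x := by
  obtain ⟨lam, hl0, hl1, hlam⟩ := exists_lam hg hk hd
  obtain ⟨m0, hm00, hm01, hm0⟩ := exists_m0 hg hk hd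
  suffices main : ∀ τ, ∃ C, 0 < C ∧ ∀ t, 1 ≤ t → t ≤ τ → t ≤ k → ∀ w : List (Fin d),
      ∀ x ∈ I01, |iteratedDerivWithin t (wordMap g w) I01 x|
        ≤ C * derivWithin (wordMap g w) I01 x by
    obtain ⟨C, hC0, hC⟩ := main k
    exact ⟨C, hC0, fun t h1 h2 => hC t h1 h2 h2⟩
  intro τ
  induction τ with
  | zero => exact ⟨1, one_pos, by omega⟩
  | succ n ihn =>
    obtain ⟨C, hC0, hC⟩ := ihn
    by_cases hk1 : n + 1 ≤ k
    · rcases Nat.eq_zero_or_pos n with hn0 | hn1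
      · -- t = 1 only
        subst hn0
        refine ⟨max C 1, lt_of_lt_of_le hC0 (le_max_left _ _), fun t h1 h2 h3 w x hx => ?_⟩
        have ht : t = 1 := by omega
        subst ht
        rw [iteratedDerivWithin_one,
          abs_of_pos (derivWithin_wordMap_pos hg hk w hx)]
        nlinarith [derivWithin_wordMap_pos hg hk w hx, le_max_right C 1]
      · -- real work : t = n + 1, 1 ≤ n
        choose Pi hPiG hPitop hPiid using fun i : Fin d =>
          expansion hg hk i (n+1) (by omega) hk1
        -- uniform bound on the coefficient functions
        have : Nonempty (Fin d × Fin (n+2)) := ⟨⟨⟨0, hd⟩, ⟨0, by omega⟩⟩⟩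
        obtain ⟨MP', hMP'⟩ := exists_uniform (ι := Fin d × Fin (n+2))
          (p := fun im c => ∀ x ∈ I01, |Pi im.1 (im.2 : ℕ) x| ≤ c)
          (fun im a b hab h x hx => le_trans (h x hx) hab)
          (fun im => by
            obtain ⟨M, _, hM⟩ := (hPiG im.1 (im.2 : ℕ)).bound hg
            exact ⟨M, hM⟩)
        set MP := max MP' 1 with hMPdef
        have hMP0 : (0:ℝ) < MP := lt_of_lt_of_le one_pos (le_max_right _ _)
        have hMP : ∀ i : Fin d, ∀ m, m ≤ n + 1 → ∀ x ∈ I01, |Pi i m x| ≤ MP :=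
          fun i m hm x hx => le_trans (hMP' ⟨i, ⟨m, by omega⟩⟩ x hx) (le_max_left _ _)
        have hlamn : lam ^ n < 1 := pow_lt_one₀ hl0.le hl1 (by omega)
        set C1 := (n * C * MP / m0) / (1 - lam ^ n) with hC1def
        have hC10 : 0 < C1 := by
          apply div_pos
          · apply div_pos
            · have : (0:ℝ) < (n:ℝ) := by exact_mod_cast hn1
              positivity
            · exact hm00
          · linarith
        have hfix : C1 * (1 - lam ^ n) = n * C * MP / m0 :=
          div_mul_cancel₀ _ (by linarith)
        have hword : ∀ w : List (Fin d), ∀ x ∈ I01,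
            |iteratedDerivWithin (n+1) (wordMap g w) I01 x|
              ≤ C1 * derivWithin (wordMap g w) I01 x := by
          intro w
          induction w with
          | nil =>
            intro x hx
            rw [iteratedDerivWithin_id_zero (n+1) (by omega) hx, abs_zero]
            have h1 := (hasDerivWithinAt_id x I01).derivWithin (udiff x hx)
            show (0:ℝ) ≤ C1 * derivWithin id I01 x
            rw [h1]
            linarith
          | cons i w ihw =>
            intro x hx
            have hgx := hg.maps i hx
            set a := derivWithin (wordMap g w) I01 (g i x) with hadef
            set b := derivWithin (g i) I01 x with hbdef
            have ha : 0 < a := derivWithin_wordMap_pos hg hk w hgx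
            have hb0 : 0 < b := hg.deriv_pos i x hx
            have hbl : b ≤ lam := hlam i x hx
            have hbm : m0 ≤ b := hm0 i x hx
            have hfuneq : wordMap g (i :: w) = (fun y => wordMap g w (g i y)) := rfl
            rw [derivWithin_wordMap_cons hg hk i w hx, hfuneq,
              hPiid i (wordMap g w) (contDiffOn_wordMap hg w) x hx]
            have habs := Finset.abs_sum_le_sum_abs
              (fun m => iteratedDerivWithin (m+1) (wordMap g w) I01 (g i x) * Pi i (m+1) x)
              (Finset.range (n+1))
            have hsplit := Finset.sum_range_succ
              (fun m => |iteratedDerivWithin (m+1) (wordMap g w) I01 (g i x) * Pi i (m+1) x|) n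
            have hlow : ∑ m ∈ Finset.range n,
                |iteratedDerivWithin (m+1) (wordMap g w) I01 (g i x) * Pi i (m+1) x|
                ≤ n * (C * MP * a) := by
              have := Finset.sum_le_sum (s := Finset.range n)
                (f := fun m => |iteratedDerivWithin (m+1) (wordMap g w) I01 (g i x)
                  * Pi i (m+1) x|)
                (g := fun _ => C * MP * a) (fun m hm => by
                  show |iteratedDerivWithin (m+1) (wordMap g w) I01 (g i x)
                    * Pi i (m+1) x| ≤ C * MP * a
                  have hmr := Finset.mem_range.mp hm
                  rw [abs_mul]
                  have e1 : |iteratedDerivWithin (m+1) (wordMap g w) I01 (g i x)| ≤ C * a :=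
                    hC (m+1) (by omega) (by omega) (by omega) w (g i x) hgx
                  have e2 : |Pi i (m+1) x| ≤ MP := hMP i (m+1) (by omega) x hx
                  calc |iteratedDerivWithin (m+1) (wordMap g w) I01 (g i x)| * |Pi i (m+1) x|
                      ≤ (C * a) * MP := mul_le_mul e1 e2 (abs_nonneg _)
                        (by positivity)
                    _ = C * MP * a := by ring)
              rwa [Finset.sum_const, Finset.card_range, nsmul_eq_mul] at this
            have htop : |iteratedDerivWithin (n+1) (wordMap g w) I01 (g i x) * Pi i (n+1) x|
                ≤ (C1 * a) * (b * lam ^ n) := by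
              rw [abs_mul, hPitop i x hx, ← hbdef, abs_of_pos (pow_pos hb0 _)]
              have e1 : |iteratedDerivWithin (n+1) (wordMap g w) I01 (g i x)| ≤ C1 * a :=
                ihw (g i x) hgx
              have e2 : b ^ (n+1) ≤ b * lam ^ n := by
                rw [pow_succ']
                exact mul_le_mul_of_nonneg_left (pow_le_pow_left₀ hb0.le hbl n) hb0.le
              exact mul_le_mul e1 e2 (by positivity) (by positivity)
            have hstep : n * (C * MP * a) ≤ (n * C * MP / m0) * (a * b) := by
              have hcc : n * C * MP / m0 * m0 = n * C * MP := div_mul_cancel₀ _ hm00.ne'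
              have hKpos : (0:ℝ) ≤ n * C * MP / m0 := by positivity
              nlinarith [mul_le_mul_of_nonneg_left hbm (mul_nonneg hKpos ha.le)]
            calc |∑ m ∈ Finset.range (n+1),
                iteratedDerivWithin (m+1) (wordMap g w) I01 (g i x) * Pi i (m+1) x|
                ≤ ∑ m ∈ Finset.range (n+1),
                  |iteratedDerivWithin (m+1) (wordMap g w) I01 (g i x) * Pi i (m+1) x| := habs
              _ = (∑ m ∈ Finset.range n,
                    |iteratedDerivWithin (m+1) (wordMap g w) I01 (g i x) * Pi i (m+1) x|)
                  + |iteratedDerivWithin (n+1) (wordMap g w) I01 (g i x) * Pi i (n+1) x| := hsplit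
              _ ≤ n * (C * MP * a) + (C1 * a) * (b * lam ^ n) := add_le_add hlow htop
              _ ≤ (n * C * MP / m0) * (a * b) + C1 * lam ^ n * (a * b) := by
                  refine add_le_add hstep (le_of_eq ?_)
                  ring
              _ = C1 * (a * b) := by
                  have h9 : C1 - C1 * lam ^ n = n * C * MP / m0 := by nlinarith [hfix]
                  rw [← h9]; ring
        refine ⟨max (max C 1) C1, by positivity, fun t h1 h2 h3 w x hx => ?_⟩
        have hw' := derivWithin_wordMap_pos hg hk w hx
        rcases Nat.lt_or_ge t (n+1) with hlt | hge
        · refine le_trans (hC t h1 (by omega) h3 w x hx) ?_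
          have : C ≤ max (max C 1) C1 := le_trans (le_max_left C 1) (le_max_left _ _)
          nlinarith
        · have ht : t = n + 1 := by omega
          subst ht
          refine le_trans (hword w x hx) ?_
          have : C1 ≤ max (max C 1) C1 := le_max_right _ _
          nlinarith
    · -- n + 1 > k : nothing new
      exact ⟨C, hC0, fun t h1 h2 h3 w x hx => hC t h1 (by omega) h3 w x hx⟩

end Stmt12
namespace Stmt12

variable {d k : ℕ} {ε : ℝ} {g : Fin d → ℝ → ℝ}

set_option maxHeartbeats 1600000 in
lemma holder_bound (hg : IsCantorSystem k ε g) (hk : 1 ≤ k) (hd : 0 < d)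
    (hε : ε ∈ Set.Ioc (0:ℝ) 1) :
    ∃ CH, 0 < CH ∧ ∀ w : List (Fin d), ∀ x ∈ I01, ∀ y ∈ I01,
      |iteratedDerivWithin k (wordMap g w) I01 x - iteratedDerivWithin k (wordMap g w) I01 y|
        ≤ CH * derivWithin (wordMap g w) I01 x * |x - y| ^ ε := by
  obtain ⟨lam, hl0, hl1, hlam⟩ := exists_lam hg hk hd
  obtain ⟨m0, hm00, hm01, hm0⟩ := exists_m0 hg hk hd
  obtain ⟨Q, hQ0, hQ⟩ := distortion hg hk hd hε
  obtain ⟨C, hC0, hC⟩ := deriv_bound hg hk hd hε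
  set E := Real.exp Q with hEdef
  have hE1 : (1:ℝ) ≤ E := Real.one_le_exp hQ0.le
  have hE0 : (0:ℝ) < E := lt_of_lt_of_le one_pos hE1
  -- distortion with constant E
  have hQsup : ∀ w : List (Fin d), ∀ z1 ∈ I01, ∀ z2 ∈ I01,
      derivWithin (wordMap g w) I01 z1 ≤ E * derivWithin (wordMap g w) I01 z2 := by
    intro w z1 hz1 z2 hz2
    refine le_trans (hQ w z1 hz1 z2 hz2) ?_
    rw [mul_comm E _]
    refine mul_le_mul_of_nonneg_left ?_ (derivWithin_wordMap_pos hg hk w hz2).le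
    exact Real.exp_le_exp.mpr (by
      have h1 : |z1 - z2| ^ ε ≤ 1 := rpow_sub_le_one hz1 hz2 hε.1
      nlinarith)
  -- MVT for intermediate iterated derivatives
  have hMVT : ∀ w : List (Fin d), ∀ m : ℕ, m + 1 ≤ k → ∀ z1 ∈ I01, ∀ z2 ∈ I01,
      |iteratedDerivWithin m (wordMap g w) I01 z1 - iteratedDerivWithin m (wordMap g w) I01 z2|
        ≤ C * E * derivWithin (wordMap g w) I01 z1 * |z1 - z2| := by
    intro w m hm z1 hz1 z2 hz2
    have hdiff : DifferentiableOn ℝ (iteratedDerivWithin m (wordMap g w) I01) I01 :=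
      (contDiffOn_wordMap hg w).differentiableOn_iteratedDerivWithin (by exact_mod_cast hm) udiff
    refine lip_of_derivWithin_le hdiff (fun z hz => ?_) hz1 hz2
    rw [← iteratedDerivWithin_succ]
    calc |iteratedDerivWithin (m+1) (wordMap g w) I01 z|
        ≤ C * derivWithin (wordMap g w) I01 z := hC (m+1) (by omega) hm w z hz
      _ ≤ C * (E * derivWithin (wordMap g w) I01 z1) :=
          mul_le_mul_of_nonneg_left (hQsup w z hz z1 hz1) hC0.le
      _ = C * E * derivWithin (wordMap g w) I01 z1 := by ring
  obtain ⟨p, rfl⟩ : ∃ p, k = p + 1 := ⟨k - 1, by omega⟩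
  -- expansion data at level k = p + 1
  choose Pi hPiG hPitop hPiid using fun i : Fin d =>
    expansion hg hk i (p+1) (by omega) le_rfl
  have hne : Nonempty (Fin d × Fin (p+2)) := ⟨⟨⟨0, hd⟩, ⟨0, by omega⟩⟩⟩
  obtain ⟨MP', hMP'⟩ := exists_uniform (ι := Fin d × Fin (p+2))
    (p := fun im c => ∀ x ∈ I01, |Pi im.1 (im.2 : ℕ) x| ≤ c)
    (fun im a b hab h x hx => le_trans (h x hx) hab)
    (fun im => by
      obtain ⟨M, _, hM⟩ := (hPiG im.1 (im.2 : ℕ)).bound hg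
      exact ⟨M, hM⟩)
  set MP := max MP' 1 with hMPdef
  have hMP0 : (0:ℝ) < MP := lt_of_lt_of_le one_pos (le_max_right _ _)
  have hMP : ∀ i : Fin d, ∀ m, m ≤ p + 1 → ∀ x ∈ I01, |Pi i m x| ≤ MP :=
    fun i m hm x hx => le_trans (hMP' ⟨i, ⟨m, by omega⟩⟩ x hx) (le_max_left _ _)
  obtain ⟨HP', hHP'⟩ := exists_uniform (ι := Fin d × Fin (p+2))
    (p := fun im c => ∀ x ∈ I01, ∀ y ∈ I01,
      |Pi im.1 (im.2 : ℕ) x - Pi im.1 (im.2 : ℕ) y| ≤ c * |x - y| ^ ε)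
    (fun im a b hab h x hx y hy => le_trans (h x hx y hy)
      (mul_le_mul_of_nonneg_right hab (rpow_nonneg' x y)))
    (fun im => by
      obtain ⟨H, _, hH⟩ := (hPiG im.1 (im.2 : ℕ)).holder hg hd hε
      exact ⟨H, hH⟩)
  set HP := max HP' 1 with hHPdef
  have hHP0 : (0:ℝ) < HP := lt_of_lt_of_le one_pos (le_max_right _ _)
  have hHP : ∀ i : Fin d, ∀ m, m ≤ p + 1 → ∀ x ∈ I01, ∀ y ∈ I01,
      |Pi i m x - Pi i m y| ≤ HP * |x - y| ^ ε :=
    fun i m hm x hx y hy => le_trans (hHP' ⟨i, ⟨m, by omega⟩⟩ x hx y hy)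
      (mul_le_mul_of_nonneg_right (le_max_left _ _) (rpow_nonneg' x y))
  -- the contraction factor and the constant
  obtain ⟨θ, hθ0, hθ1, hθdef⟩ : ∃ θ : ℝ, 0 < θ ∧ θ < 1 ∧ θ = lam ^ p * lam ^ ε := by
    refine ⟨lam ^ p * lam ^ ε, mul_pos (pow_pos hl0 p) (Real.rpow_pos_of_pos hl0 ε), ?_, rfl⟩
    have h1 : lam ^ p ≤ 1 := pow_le_one₀ hl0.le hl1.le
    have h2 : lam ^ ε < 1 := Real.rpow_lt_one hl0.le hl1 hε.1
    nlinarith [pow_pos hl0 p]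
  obtain ⟨Kb, hKb0, ekb⟩ : ∃ Kb : ℝ, 0 < Kb ∧ Kb * m0 = C * E * MP :=
    ⟨C * E * MP / m0, by positivity, div_mul_cancel₀ _ hm00.ne'⟩
  obtain ⟨Kc, hKc0, ekc⟩ : ∃ Kc : ℝ, 0 < Kc ∧ Kc * m0 = C * E * HP :=
    ⟨C * E * HP / m0, by positivity, div_mul_cancel₀ _ hm00.ne'⟩
  obtain ⟨CH, hCH0, hfix⟩ : ∃ CH : ℝ, 0 < CH ∧ CH * (1 - θ) = (p+1) * (Kb + Kc) := by
    refine ⟨((p+1) * (Kb + Kc)) / (1 - θ), div_pos (by positivity) (by linarith),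
      div_mul_cancel₀ _ (by linarith)⟩
  refine ⟨CH, hCH0, ?_⟩
  intro w
  induction w with
  | nil =>
    intro x hx y hy
    have hconst : iteratedDerivWithin (p+1) (wordMap g []) I01 x
        = iteratedDerivWithin (p+1) (wordMap g []) I01 y := by
      rcases Nat.eq_zero_or_pos p with hp0 | hp1
      · subst hp0
        rw [iteratedDerivWithin_id_one hx, iteratedDerivWithin_id_one hy]
      · rw [iteratedDerivWithin_id_zero (p+1) (by omega) hx,
          iteratedDerivWithin_id_zero (p+1) (by omega) hy]
    rw [hconst, sub_self, abs_zero]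
    have h1 := (hasDerivWithinAt_id x I01).derivWithin (udiff x hx)
    have : (0:ℝ) ≤ CH * derivWithin id I01 x * |x - y| ^ ε := by
      rw [h1]
      have := rpow_nonneg' (ε := ε) x y
      positivity
    exact this
  | cons i w ihw =>
    intro x hx y hy
    have hgx := hg.maps i hx
    have hgy := hg.maps i hy
    set a := derivWithin (wordMap g w) I01 (g i x) with hadef
    set b := derivWithin (g i) I01 x with hbdef
    set r := |x - y| ^ ε with hrdef
    have hr0 : 0 ≤ r := rpow_nonneg' x y
    have ha : 0 < a := derivWithin_wordMap_pos hg hk w hgx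
    have hb0 : 0 < b := hg.deriv_pos i x hx
    have hbl : b ≤ lam := hlam i x hx
    have hbm : m0 ≤ b := hm0 i x hx
    have hgl : |g i x - g i y| ≤ lam * |x - y| := single_lip hg hk hlam i hx hy
    have hglr : |g i x - g i y| ≤ r := by
      rw [hrdef]
      calc |g i x - g i y| ≤ lam * |x - y| := hgl
        _ ≤ 1 * |x - y| := mul_le_mul_of_nonneg_right hl1.le (abs_nonneg _)
        _ = |x - y| := one_mul _
        _ ≤ |x - y| ^ ε := le_rpow_self (abs_nonneg _) (abs_sub_le_one hx hy) hε.1 hε.2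
    have hglre : |g i x - g i y| ^ ε ≤ lam ^ ε * r := by
      rw [hrdef]
      calc |g i x - g i y| ^ ε ≤ (lam * |x - y|) ^ ε :=
            Real.rpow_le_rpow (abs_nonneg _) hgl hε.1.le
        _ = lam ^ ε * |x - y| ^ ε := Real.mul_rpow hl0.le (abs_nonneg _)
    have hfuneq : wordMap g (i :: w) = (fun y => wordMap g w (g i y)) := rfl
    rw [derivWithin_wordMap_cons hg hk i w hx, hfuneq,
      hPiid i (wordMap g w) (contDiffOn_wordMap hg w) x hx,
      hPiid i (wordMap g w) (contDiffOn_wordMap hg w) y hy, ← Finset.sum_sub_distrib]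
    -- termwise bounds
    have hterm : ∀ m ∈ Finset.range p,
        |iteratedDerivWithin (m+1) (wordMap g w) I01 (g i x) * Pi i (m+1) x
          - iteratedDerivWithin (m+1) (wordMap g w) I01 (g i y) * Pi i (m+1) y|
        ≤ (Kb + Kc) * (a * b * r) := by
      intro m hm
      have hmr := Finset.mem_range.mp hm
      set A1 := iteratedDerivWithin (m+1) (wordMap g w) I01 (g i x)
      set A2 := iteratedDerivWithin (m+1) (wordMap g w) I01 (g i y)
      have hdA : |A1 - A2| ≤ C * E * a * r := by
        calc |A1 - A2| ≤ C * E * a * |g i x - g i y| := hMVT w (m+1) (by omega) _ hgx _ hgy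
          _ ≤ C * E * a * r := mul_le_mul_of_nonneg_left hglr (by positivity)
      have hP1 : |Pi i (m+1) x| ≤ MP := hMP i (m+1) (by omega) x hx
      have hA2 : |A2| ≤ C * E * a := by
        calc |A2| ≤ C * derivWithin (wordMap g w) I01 (g i y) :=
              hC (m+1) (by omega) (by omega) w _ hgy
          _ ≤ C * (E * a) := mul_le_mul_of_nonneg_left (hQsup w _ hgy _ hgx) hC0.le
          _ = C * E * a := by ring
      have hdP : |Pi i (m+1) x - Pi i (m+1) y| ≤ HP * r := hHP i (m+1) (by omega) x hx y hy
      calc |A1 * Pi i (m+1) x - A2 * Pi i (m+1) y|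
          = |(A1 - A2) * Pi i (m+1) x + A2 * (Pi i (m+1) x - Pi i (m+1) y)| := by
            congr 1; ring
        _ ≤ |(A1 - A2) * Pi i (m+1) x| + |A2 * (Pi i (m+1) x - Pi i (m+1) y)| := abs_add_le _ _
        _ = |A1 - A2| * |Pi i (m+1) x| + |A2| * |Pi i (m+1) x - Pi i (m+1) y| := by
            rw [abs_mul, abs_mul]
        _ ≤ (C * E * a * r) * MP + (C * E * a) * (HP * r) := by
            refine add_le_add (mul_le_mul hdA hP1 (abs_nonneg _) (by positivity))
              (mul_le_mul hA2 hdP (abs_nonneg _) (by positivity))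
        _ = (Kb + Kc) * (a * (m0 * r)) := by
            linear_combination (-(a * r)) * ekb - (a * r) * ekc
        _ ≤ (Kb + Kc) * (a * (b * r)) := by
            refine mul_le_mul_of_nonneg_left
              (mul_le_mul_of_nonneg_left (mul_le_mul_of_nonneg_right hbm hr0) ha.le)
              (by linarith)
        _ = (Kb + Kc) * (a * b * r) := by ring
    have htop :
        |iteratedDerivWithin (p+1) (wordMap g w) I01 (g i x) * Pi i (p+1) x
          - iteratedDerivWithin (p+1) (wordMap g w) I01 (g i y) * Pi i (p+1) y|
        ≤ CH * θ * (a * b * r) + Kc * (a * b * r) := by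
      set A1 := iteratedDerivWithin (p+1) (wordMap g w) I01 (g i x)
      set A2 := iteratedDerivWithin (p+1) (wordMap g w) I01 (g i y)
      have hdA : |A1 - A2| ≤ CH * a * (lam ^ ε * r) := by
        calc |A1 - A2| ≤ CH * a * |g i x - g i y| ^ ε := ihw _ hgx _ hgy
          _ ≤ CH * a * (lam ^ ε * r) := mul_le_mul_of_nonneg_left hglre (by positivity)
      have hPtopx : |Pi i (p+1) x| = b ^ (p+1) := by
        rw [hPitop i x hx, ← hbdef, abs_of_pos (pow_pos hb0 _)]
      have hbpow : b ^ (p+1) ≤ b * lam ^ p := by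
        rw [pow_succ']
        exact mul_le_mul_of_nonneg_left (pow_le_pow_left₀ hb0.le hbl p) hb0.le
      have hA2 : |A2| ≤ C * E * a := by
        calc |A2| ≤ C * derivWithin (wordMap g w) I01 (g i y) :=
              hC (p+1) (by omega) (by omega) w _ hgy
          _ ≤ C * (E * a) := mul_le_mul_of_nonneg_left (hQsup w _ hgy _ hgx) hC0.le
          _ = C * E * a := by ring
      have hdP : |Pi i (p+1) x - Pi i (p+1) y| ≤ HP * r := hHP i (p+1) le_rfl x hx y hy
      calc |A1 * Pi i (p+1) x - A2 * Pi i (p+1) y|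
          = |(A1 - A2) * Pi i (p+1) x + A2 * (Pi i (p+1) x - Pi i (p+1) y)| := by
            congr 1; ring
        _ ≤ |A1 - A2| * |Pi i (p+1) x| + |A2| * |Pi i (p+1) x - Pi i (p+1) y| := by
            refine le_trans (abs_add_le _ _) (le_of_eq ?_)
            rw [abs_mul, abs_mul]
        _ ≤ (CH * a * (lam ^ ε * r)) * (b * lam ^ p) + (C * E * a) * (HP * r) := by
            refine add_le_add (mul_le_mul hdA (hPtopx.le.trans hbpow) (abs_nonneg _)
              (by positivity)) (mul_le_mul hA2 hdP (abs_nonneg _) (by positivity))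
        _ ≤ CH * θ * (a * b * r) + Kc * (a * b * r) := by
            refine add_le_add (le_of_eq (by rw [hθdef]; ring)) ?_
            calc (C * E * a) * (HP * r) = Kc * (a * (m0 * r)) := by
                  linear_combination (-(a * r)) * ekc
              _ ≤ Kc * (a * (b * r)) := mul_le_mul_of_nonneg_left
                  (mul_le_mul_of_nonneg_left (mul_le_mul_of_nonneg_right hbm hr0) ha.le)
                  hKc0.le
              _ = Kc * (a * b * r) := by ring
    calc |∑ m ∈ Finset.range (p+1),
          (iteratedDerivWithin (m+1) (wordMap g w) I01 (g i x) * Pi i (m+1) x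
            - iteratedDerivWithin (m+1) (wordMap g w) I01 (g i y) * Pi i (m+1) y)|
        ≤ ∑ m ∈ Finset.range (p+1),
          |iteratedDerivWithin (m+1) (wordMap g w) I01 (g i x) * Pi i (m+1) x
            - iteratedDerivWithin (m+1) (wordMap g w) I01 (g i y) * Pi i (m+1) y| :=
          Finset.abs_sum_le_sum_abs _ _
      _ = (∑ m ∈ Finset.range p,
            |iteratedDerivWithin (m+1) (wordMap g w) I01 (g i x) * Pi i (m+1) x
              - iteratedDerivWithin (m+1) (wordMap g w) I01 (g i y) * Pi i (m+1) y|)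
          + |iteratedDerivWithin (p+1) (wordMap g w) I01 (g i x) * Pi i (p+1) x
              - iteratedDerivWithin (p+1) (wordMap g w) I01 (g i y) * Pi i (p+1) y| :=
          Finset.sum_range_succ _ p
      _ ≤ p * ((Kb + Kc) * (a * b * r)) + (CH * θ * (a * b * r) + Kc * (a * b * r)) := by
          refine add_le_add ?_ htop
          have := Finset.sum_le_sum (s := Finset.range p)
            (f := fun m => |iteratedDerivWithin (m+1) (wordMap g w) I01 (g i x) * Pi i (m+1) x
              - iteratedDerivWithin (m+1) (wordMap g w) I01 (g i y) * Pi i (m+1) y|)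
            (g := fun _ => (Kb + Kc) * (a * b * r)) hterm
          rwa [Finset.sum_const, Finset.card_range, nsmul_eq_mul] at this
      _ ≤ CH * (a * b) * r := by
          have h9 : CH - CH * θ = (p+1) * (Kb + Kc) := by nlinarith [hfix]
          have habr : 0 ≤ a * b * r := by positivity
          nlinarith [mul_le_mul_of_nonneg_right (le_of_eq h9) habr]

end Stmt12
namespace Stmt12

variable {d k : ℕ} {ε : ℝ} {g : Fin d → ℝ → ℝ}

lemma distortion_sup (hg : IsCantorSystem k ε g) (hk : 1 ≤ k) (hd : 0 < d)
    (hε : ε ∈ Set.Ioc (0:ℝ) 1) :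
    ∃ E : ℝ, 1 ≤ E ∧ ∀ w : List (Fin d), ∀ z1 ∈ I01, ∀ z2 ∈ I01,
      derivWithin (wordMap g w) I01 z1 ≤ E * derivWithin (wordMap g w) I01 z2 := by
  obtain ⟨Q, hQ0, hQ⟩ := distortion hg hk hd hε
  refine ⟨Real.exp Q, Real.one_le_exp hQ0.le, fun w z1 hz1 z2 hz2 => ?_⟩
  refine le_trans (hQ w z1 hz1 z2 hz2) ?_
  rw [mul_comm (Real.exp Q) _]
  refine mul_le_mul_of_nonneg_left ?_ (derivWithin_wordMap_pos hg hk w hz2).le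
  refine Real.exp_le_exp.mpr ?_
  have h1 : |z1 - z2| ^ ε ≤ 1 := rpow_sub_le_one hz1 hz2 hε.1
  nlinarith

lemma affine_mem {a b : ℝ} (ha : a ∈ I01) (hb : b ∈ I01) (hab : a ≤ b)
    {x : ℝ} (hx : x ∈ I01) : a + (b - a) * x ∈ I01 := by
  constructor
  · have : 0 ≤ (b - a) * x := mul_nonneg (by linarith) hx.1
    have := ha.1
    linarith
  · have h1 : (b - a) * x ≤ (b - a) * 1 := mul_le_mul_of_nonneg_left hx.2 (by linarith)
    have := hb.2
    linarith

lemma renorm_iteratedDeriv (hg : IsCantorSystem k ε g) (hk : 1 ≤ k)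
    {a b c δ' : ℝ} (ha : a ∈ I01) (hb : b ∈ I01) (hab : a ≤ b) (hδ' : δ' ≠ 0)
    (v : List (Fin d)) :
    ∀ t : ℕ, 1 ≤ t → t ≤ k → ∀ x ∈ I01,
      iteratedDerivWithin t (fun y => (wordMap g v (a + (b - a) * y) - c) / δ') I01 x
        = (b - a) ^ t / δ' * iteratedDerivWithin t (wordMap g v) I01 (a + (b - a) * x) := by
  have hk' : (1 : WithTop ℕ∞) ≤ (k : ℕ) := by exact_mod_cast hk
  have hmaps : Set.MapsTo (fun y : ℝ => a + (b - a) * y) I01 I01 :=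
    fun x hx => affine_mem ha hb hab hx
  have hLd : ∀ x : ℝ, HasDerivWithinAt (fun y : ℝ => a + (b - a) * y) (b - a) I01 x := by
    intro x
    simpa using ((hasDerivWithinAt_id x I01).const_mul (b - a)).const_add a
  intro t
  induction t with
  | zero => omega
  | succ n ih =>
    rcases Nat.eq_zero_or_pos n with hn0 | hn1
    · subst hn0
      intro _ h1k x hx
      have hLx := hmaps hx
      have hG : HasDerivWithinAt (wordMap g v)
          (derivWithin (wordMap g v) I01 (a + (b - a) * x)) I01 (a + (b - a) * x) :=
        (((contDiffOn_wordMap hg v).differentiableOn (lt_of_lt_of_le zero_lt_one hk').ne') _ hLx).hasDerivWithinAt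
      have hcomp := hG.comp x (hLd x) hmaps
      have hF : HasDerivWithinAt
          (fun y => (wordMap g v (a + (b - a) * y) - c) / δ')
          ((derivWithin (wordMap g v) I01 (a + (b - a) * x) * (b - a)) / δ') I01 x :=
        (hcomp.sub_const c).div_const δ'
      rw [iteratedDerivWithin_one, hF.derivWithin (udiff x hx),
        iteratedDerivWithin_one]
      ring
    · intro _ hsk x hx
      have hLx := hmaps hx
      have hEq : Set.EqOn
          (iteratedDerivWithin n (fun y => (wordMap g v (a + (b - a) * y) - c) / δ') I01)
          (fun y => (b - a) ^ n / δ'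
            * iteratedDerivWithin n (wordMap g v) I01 (a + (b - a) * y)) I01 :=
        fun y hy => ih hn1 (by omega) y hy
      have hIter : HasDerivWithinAt (iteratedDerivWithin n (wordMap g v) I01)
          (iteratedDerivWithin (n+1) (wordMap g v) I01 (a + (b - a) * x)) I01
          (a + (b - a) * x) :=
        hasDerivWithinAt_iteratedDerivWithin (contDiffOn_wordMap hg v) hsk hLx
      have hcomp : HasDerivWithinAt
          (fun y => (b - a) ^ n / δ'
            * iteratedDerivWithin n (wordMap g v) I01 (a + (b - a) * y))
          ((b - a) ^ n / δ'
            * (iteratedDerivWithin (n+1) (wordMap g v) I01 (a + (b - a) * x) * (b - a)))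
          I01 x := (hIter.comp x (hLd x) hmaps).const_mul ((b - a) ^ n / δ')
      rw [iteratedDerivWithin_succ, derivWithin_congr hEq (hEq hx),
        hcomp.derivWithin (udiff x hx)]
      ring

end Stmt12

set_option maxHeartbeats 1000000 in
/-- for a `C^{k+ε}` Cantor system, the renormalized identification
`F = (L')⁻¹ ∘ H ∘ L : [0,1] → [0,1]` (where `H = G_v` maps `I_u` onto `I_{uv}`) satisfies
`sup |D^t F| ≤ C |I_u|^{t-1}` for `1 ≤ t ≤ k` and has `ε`-Hölder seminorm of `D^k F`
at most `C |I_u|^{k+ε-1}`. -/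
theorem stmt12 (d k : ℕ) (hd : 2 ≤ d) (hk : 1 ≤ k) (ε : ℝ) (hε : ε ∈ Set.Ioc (0:ℝ) 1)
    (g : Fin d → ℝ → ℝ) (hg : IsCantorSystem k ε g) :
    ∃ C > 0, ∀ u v : List (Fin d), v ≠ [] → ∀ F : ℝ → ℝ,
      F = renorm (wordMap g u 0) (wordMap g u 1)
            (wordMap g (u ++ v) 0) (wordMap g (u ++ v) 1) (wordMap g v) →
      (∀ t : ℕ, 1 ≤ t → t ≤ k → ∀ x ∈ I01,
        |iteratedDerivWithin t F I01 x| ≤ C * wordLen g u ^ (t - 1)) ∧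
      (∀ x ∈ I01, ∀ y ∈ I01,
        |iteratedDerivWithin k F I01 x - iteratedDerivWithin k F I01 y|
          ≤ C * wordLen g u ^ ((k : ℝ) + ε - 1) * |x - y| ^ ε) := by

  have hd0 : 0 < d := by omega
  obtain ⟨C1, hC10, hC1⟩ := Stmt12.deriv_bound hg hk hd0 hε
  obtain ⟨CH, hCH0, hCH⟩ := Stmt12.holder_bound hg hk hd0 hε
  obtain ⟨E, hE1, hE⟩ := Stmt12.distortion_sup hg hk hd0 hε
  have hE0 : (0:ℝ) < E := lt_of_lt_of_le one_pos hE1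
  refine ⟨(C1 + CH) * E, by positivity, ?_⟩
  intro u v hv F hF
  subst hF
  have ha : wordMap g u 0 ∈ I01 :=
    Stmt12.mapsTo_wordMap hg.maps u (Set.left_mem_Icc.mpr zero_le_one)
  have hb : wordMap g u 1 ∈ I01 :=
    Stmt12.mapsTo_wordMap hg.maps u (Set.right_mem_Icc.mpr zero_le_one)
  have hδ0 : 0 < wordLen g u := Stmt12.wordLen_pos hg hk u
  have hδ1 : wordLen g u ≤ 1 := Stmt12.wordLen_le_one hg u
  have hδe : wordLen g u = wordMap g u 1 - wordMap g u 0 := rfl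
  have hab : wordMap g u 0 < wordMap g u 1 := by rw [hδe] at hδ0; linarith
  obtain ⟨ξ, hξ, hslope⟩ := Stmt12.exists_slope hg hk v hab ha hb
  have hξpos := Stmt12.derivWithin_wordMap_pos hg hk v hξ
  have hA : wordMap g (u ++ v) 0 = wordMap g v (wordMap g u 0) := Stmt12.wordMap_append u v 0
  have hB : wordMap g (u ++ v) 1 = wordMap g v (wordMap g u 1) := Stmt12.wordMap_append u v 1
  have hδ' : wordMap g (u ++ v) 1 - wordMap g (u ++ v) 0
      = derivWithin (wordMap g v) I01 ξ * wordLen g u := by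
    rw [hA, hB, hslope, hδe]
  have hδ'0 : 0 < wordMap g (u ++ v) 1 - wordMap g (u ++ v) 0 := by
    rw [hδ']
    exact mul_pos hξpos hδ0
  have hFd : ∀ t : ℕ, 1 ≤ t → t ≤ k → ∀ x ∈ I01,
      iteratedDerivWithin t (renorm (wordMap g u 0) (wordMap g u 1)
          (wordMap g (u ++ v) 0) (wordMap g (u ++ v) 1) (wordMap g v)) I01 x
        = wordLen g u ^ t / (wordMap g (u ++ v) 1 - wordMap g (u ++ v) 0)
          * iteratedDerivWithin t (wordMap g v) I01
              (wordMap g u 0 + wordLen g u * x) := by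
    intro t h1 h2 x hx
    exact Stmt12.renorm_iteratedDeriv hg hk ha hb hab.le hδ'0.ne' v t h1 h2 x hx
  have hLmem : ∀ x ∈ I01, wordMap g u 0 + wordLen g u * x ∈ I01 := by
    intro x hx
    exact Stmt12.affine_mem ha hb hab.le hx
  constructor
  · intro t h1 h2 x hx
    have hLx := hLmem x hx
    rw [hFd t h1 h2 x hx, abs_mul,
      abs_of_pos (div_pos (pow_pos hδ0 t) hδ'0)]
    have hbound : |iteratedDerivWithin t (wordMap g v) I01 (wordMap g u 0 + wordLen g u * x)|
        ≤ C1 * (E * derivWithin (wordMap g v) I01 ξ) := by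
      refine le_trans (hC1 t h1 h2 v _ hLx) ?_
      exact mul_le_mul_of_nonneg_left (hE v _ hLx ξ hξ) hC10.le
    have hpow : wordLen g u ^ t = wordLen g u ^ (t-1) * wordLen g u := by
      rw [← pow_succ]
      congr 1
      omega
    have hkey : wordLen g u ^ t / (wordMap g (u ++ v) 1 - wordMap g (u ++ v) 0)
        * (C1 * (E * derivWithin (wordMap g v) I01 ξ)) = C1 * E * wordLen g u ^ (t-1) := by
      rw [hδ', hpow]
      field_simp
    calc wordLen g u ^ t / (wordMap g (u ++ v) 1 - wordMap g (u ++ v) 0)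
        * |iteratedDerivWithin t (wordMap g v) I01 (wordMap g u 0 + wordLen g u * x)|
        ≤ wordLen g u ^ t / (wordMap g (u ++ v) 1 - wordMap g (u ++ v) 0)
          * (C1 * (E * derivWithin (wordMap g v) I01 ξ)) :=
          mul_le_mul_of_nonneg_left hbound (div_pos (pow_pos hδ0 t) hδ'0).le
      _ = C1 * E * wordLen g u ^ (t-1) := hkey
      _ ≤ (C1 + CH) * E * wordLen g u ^ (t-1) := by
          refine mul_le_mul_of_nonneg_right ?_ (pow_nonneg hδ0.le _)
          nlinarith
  · intro x hx y hy
    have hLx := hLmem x hx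
    have hLy := hLmem y hy
    rw [hFd k hk le_rfl x hx, hFd k hk le_rfl y hy, ← mul_sub, abs_mul,
      abs_of_pos (div_pos (pow_pos hδ0 k) hδ'0)]
    have hLL : |(wordMap g u 0 + wordLen g u * x) - (wordMap g u 0 + wordLen g u * y)|
        = wordLen g u * |x - y| := by
      rw [show (wordMap g u 0 + wordLen g u * x) - (wordMap g u 0 + wordLen g u * y)
        = wordLen g u * (x - y) by ring, abs_mul, abs_of_pos hδ0]
    have hbound : |iteratedDerivWithin k (wordMap g v) I01 (wordMap g u 0 + wordLen g u * x)
          - iteratedDerivWithin k (wordMap g v) I01 (wordMap g u 0 + wordLen g u * y)|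
        ≤ CH * (E * derivWithin (wordMap g v) I01 ξ)
          * (wordLen g u ^ ε * |x - y| ^ ε) := by
      refine le_trans (hCH v _ hLx _ hLy) ?_
      rw [hLL, Real.mul_rpow hδ0.le (abs_nonneg _)]
      refine mul_le_mul_of_nonneg_right ?_
        (mul_nonneg (Real.rpow_nonneg hδ0.le _) (Stmt12.rpow_nonneg' x y))
      exact mul_le_mul_of_nonneg_left (hE v _ hLx ξ hξ) hCH0.le
    have hpow : wordLen g u ^ k = wordLen g u ^ (k-1) * wordLen g u := by
      rw [← pow_succ]
      congr 1
      omega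
    have hrp : wordLen g u ^ ((k:ℝ) + ε - 1) = wordLen g u ^ (k-1) * wordLen g u ^ ε := by
      rw [show (k:ℝ) + ε - 1 = ((k-1 : ℕ) : ℝ) + ε by
          push_cast [Nat.cast_sub hk]; ring,
        Real.rpow_add hδ0, Real.rpow_natCast]
    have hkey : wordLen g u ^ k / (wordMap g (u ++ v) 1 - wordMap g (u ++ v) 0)
        * (CH * (E * derivWithin (wordMap g v) I01 ξ) * (wordLen g u ^ ε * |x - y| ^ ε))
        = CH * E * (wordLen g u ^ (k-1) * wordLen g u ^ ε) * |x - y| ^ ε := by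
      rw [hδ', hpow]
      field_simp
    calc wordLen g u ^ k / (wordMap g (u ++ v) 1 - wordMap g (u ++ v) 0)
        * |iteratedDerivWithin k (wordMap g v) I01 (wordMap g u 0 + wordLen g u * x)
          - iteratedDerivWithin k (wordMap g v) I01 (wordMap g u 0 + wordLen g u * y)|
        ≤ wordLen g u ^ k / (wordMap g (u ++ v) 1 - wordMap g (u ++ v) 0)
          * (CH * (E * derivWithin (wordMap g v) I01 ξ)
            * (wordLen g u ^ ε * |x - y| ^ ε)) :=
          mul_le_mul_of_nonneg_left hbound (div_pos (pow_pos hδ0 k) hδ'0).le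
      _ = CH * E * (wordLen g u ^ (k-1) * wordLen g u ^ ε) * |x - y| ^ ε := hkey
      _ = CH * E * wordLen g u ^ ((k:ℝ) + ε - 1) * |x - y| ^ ε := by rw [hrp]
      _ ≤ (C1 + CH) * E * wordLen g u ^ ((k:ℝ) + ε - 1) * |x - y| ^ ε := by
          refine mul_le_mul_of_nonneg_right
            (mul_le_mul_of_nonneg_right (by nlinarith)
              (Real.rpow_nonneg hδ0.le _)) (Stmt12.rpow_nonneg' x y)
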